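/- arXiv:2510.20311 — 3 statements merged into one kernel-verified Lean document; each statement's English description precedes it below -/
import Mathlib

section
/- For a finite-dimensional Hilbert space, a quantum state ensemble {(η_i, ρ_i)}_{i=1}^n with all η_i > 0, and an index x, the maximum confidence C_x = max over measurements {M_?} ∪ {M_i} with Tr(ρ₀ M_x) > 0 of η_x Tr(ρ_x M_x)/Tr(ρ₀ M_x) equals the minimum over real q of those q such that q ρ₀ − η_x ρ_x is positive semidefinite, where ρ₀ = Σ_i η_i ρ_i. -/
/-! Write `A = η_x ρ_x`. A congruence `X ↦ V⋆ X V` by an invertible `V` changes neither the set of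
admissible `q` nor the values of the generalized Rayleigh quotient `⟨u, A u⟩ / ⟨u, ρ₀ u⟩`, and it
turns `ρ₀` into an orthogonal projection `P`. Then `0 ≤ A ≤ P` forces `A = P A P`, so the least
admissible `q` is the top eigenvalue `‖A‖` of the transformed `A`, and a top eigenvector lies in
the range of `P`, where the quotient attains it. Measuring the projection onto that vector against
its complement has confidence equal to the quotient, while `tr((q ρ₀ - A) M) ≥ 0` bounds the
confidence of every measurement by every admissible `q`. -/

open Matrix BigOperators
open scoped ComplexOrder

namespace Matrix

variable {m : Type*} [Fintype m]

theorem star_mulVec_dotProduct_mulVec_mulVec (X V : Matrix m m ℂ) (u : m → ℂ) :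
    star (V *ᵥ u) ⬝ᵥ (X *ᵥ (V *ᵥ u)) = star u ⬝ᵥ ((star V * X * V) *ᵥ u) := by
  rw [star_mulVec, star_eq_conjTranspose]
  simp only [dotProduct_mulVec, vecMul_vecMul]

theorem trace_mul_vecMulVec_star (X : Matrix m m ℂ) (u : m → ℂ) :
    (X * vecMulVec u (star u)).trace = star u ⬝ᵥ (X *ᵥ u) := by
  rw [mul_vecMulVec, trace_vecMulVec, dotProduct_comm]

def IsRayleighMax (R A : Matrix m m ℂ) (C : ℝ) : Prop :=
  ((C : ℂ) • R - A).PosSemidef ∧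
    ∃ u : m → ℂ, 0 < star u ⬝ᵥ (R *ᵥ u) ∧ star u ⬝ᵥ (A *ᵥ u) = C * star u ⬝ᵥ (R *ᵥ u)

variable {R A : Matrix m m ℂ} {C : ℝ}

theorem IsRayleighMax.isLeast (h : IsRayleighMax R A C) :
    IsLeast {q : ℝ | ((q : ℂ) • R - A).PosSemidef} C := by
  obtain ⟨hC, u, hRu, hAu⟩ := h
  refine ⟨hC, fun q hq => ?_⟩
  have h := hq.dotProduct_mulVec_nonneg u
  rw [sub_mulVec, smul_mulVec, dotProduct_sub, dotProduct_smul, hAu, smul_eq_mul, ← sub_mul,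
    ← Complex.ofReal_sub] at h
  have h' : (0 : ℂ) ≤ (q - C : ℝ) := by simpa [hRu.ne'] using div_nonneg h hRu.le
  exact sub_nonneg.mp (Complex.zero_le_real.mp h')

variable [DecidableEq m]

open scoped Norms.L2Operator MatrixOrder in
theorem PosSemidef.trace_mul_nonneg {X M : Matrix m m ℂ} (hX : X.PosSemidef)
    (hM : M.PosSemidef) : 0 ≤ (X * M).trace := by
  obtain ⟨B, rfl⟩ := CStarAlgebra.nonneg_iff_eq_star_mul_self.mp hM.nonneg
  rw [← mul_assoc, trace_mul_comm, ← mul_assoc, star_eq_conjTranspose]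
  exact (hX.mul_mul_conjTranspose_same B).trace_nonneg

theorem isStarProjection_diagonal_ofReal {e : m → ℝ} (he : ∀ i, e i * e i = e i) :
    IsStarProjection (diagonal fun i => (e i : ℂ)) := by
  refine ⟨?_, ?_⟩
  · rw [IsIdempotentElem, diagonal_mul_diagonal]
    exact congrArg diagonal (funext fun i => by exact_mod_cast he i)
  · rw [IsSelfAdjoint, star_eq_conjTranspose, diagonal_conjTranspose]
    exact congrArg diagonal (funext fun i => Complex.conj_ofReal _)

theorem isStarProjection_inv_smul_vecMulVec {u : m → ℂ} (hu : u ≠ 0) :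
    IsStarProjection ((star u ⬝ᵥ u)⁻¹ • vecMulVec u (star u)) := by
  have hc : star u ⬝ᵥ u ≠ 0 := dotProduct_star_self_eq_zero.not.mpr hu
  refine ⟨?_, ?_⟩
  · rw [IsIdempotentElem, smul_mul_smul_comm, vecMulVec_mul_vecMulVec, vecMulVec_smul, smul_smul,
      inv_mul_cancel_right₀ hc]
  · rw [IsSelfAdjoint, star_smul, star_inv₀,
      (IsSelfAdjoint.of_nonneg (dotProduct_star_self_nonneg u)).star_eq, star_eq_conjTranspose,
      conjTranspose_vecMulVec, star_star]

theorem exists_isUnit_isStarProjection_star_mul_diagonal_mul {d : m → ℝ} (hd : ∀ i, 0 ≤ d i) :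
    ∃ G : Matrix m m ℂ, IsUnit G ∧
      IsStarProjection (star G * diagonal (fun i => (d i : ℂ)) * G) := by
  -- rescale every nonzero entry to `1`
  set g : m → ℝ := fun i => if d i = 0 then 1 else (√(d i))⁻¹
  have hsqrt (i : m) (hi : d i ≠ 0) : √(d i) ≠ 0 := (Real.sqrt_pos.mpr ((hd i).lt_of_ne' hi)).ne'
  have hg (i : m) : g i ≠ 0 := by
    by_cases hi : d i = 0
    · simp [g, hi]
    · simpa [g, hi] using hsqrt i hi
  have hgdg (i : m) : g i * d i * g i = if d i = 0 then 0 else 1 := by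
    by_cases hi : d i = 0
    · simp [hi]
    · have := hsqrt i hi
      simp only [g, hi, if_false]
      field_simp
      exact (Real.sq_sqrt (hd i)).symm
  refine ⟨diagonal fun i => (g i : ℂ),
    isUnit_diagonal.mpr (Pi.isUnit_iff.mpr fun i => (Complex.ofReal_ne_zero.mpr (hg i)).isUnit), ?_⟩
  have hconj : star (diagonal fun i => (g i : ℂ)) * diagonal (fun i => (d i : ℂ)) *
      diagonal (fun i => (g i : ℂ)) = diagonal fun i => ((g i * d i * g i : ℝ) : ℂ) := by
    rw [star_eq_conjTranspose, diagonal_conjTranspose, diagonal_mul_diagonal, diagonal_mul_diagonal]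
    simp
  rw [hconj]
  exact isStarProjection_diagonal_ofReal fun i => by rw [hgdg]; split_ifs <;> simp

theorem PosSemidef.exists_isUnit_isStarProjection_star_mul_mul (hR : R.PosSemidef) :
    ∃ V : Matrix m m ℂ, IsUnit V ∧ IsStarProjection (star V * R * V) := by
  have hUR := hR.1.conjStarAlgAut_star_eigenvectorUnitary
  rw [Unitary.conjStarAlgAut_apply, Unitary.coe_star, star_star] at hUR
  obtain ⟨G, hG, hproj⟩ :=
    exists_isUnit_isStarProjection_star_mul_diagonal_mul hR.eigenvalues_nonneg
  set U : Matrix m m ℂ := ↑hR.1.eigenvectorUnitary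
  refine ⟨U * G, Unitary.isUnit_coe.mul hG, ?_⟩
  have hconj : star (U * G) * R * (U * G) = star G * (star U * R * U) * G := by
    simp only [star_mul, mul_assoc]
  rw [hconj, hUR]
  exact hproj

open scoped Norms.L2Operator MatrixOrder in
theorem PosSemidef.exists_mulVec_eq_norm_smul [Nonempty m] (hA : A.PosSemidef) :
    ∃ w : m → ℂ, w ≠ 0 ∧ A *ᵥ w = (‖A‖ : ℂ) • w := by
  have hspec : ((‖A‖ : ℝ) : ℂ) ∈ spectrum ℂ (toLin' A) := by
    rw [spectrum_toLin']
    exact (spectrum.algebraMap_mem_iff ℂ).mpr (CStarAlgebra.norm_mem_spectrum_of_nonneg hA.nonneg)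
  obtain ⟨w, hw⟩ := (Module.End.hasEigenvalue_iff_mem_spectrum.mpr hspec).exists_hasEigenvector
  exact ⟨w, hw.2, by simpa using hw.apply_eq_smul⟩

open scoped MatrixOrder in
theorem IsStarProjection.exists_povm {ι : Type*} [Fintype ι] [DecidableEq ι] {P : Matrix m m ℂ}
    (hP : IsStarProjection P) (x : ι) :
    ∃ M : Option ι → Matrix m m ℂ, (∀ j, (M j).PosSemidef) ∧ ∑ j, M j = 1 ∧ M (some x) = P := by
  refine ⟨fun j => j.elim (1 - P) fun i => if i = x then P else 0, ?_, ?_, by simp⟩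
  · rintro (_ | i)
    · exact nonneg_iff_posSemidef.mp hP.one_sub_nonneg
    · by_cases hi : i = x
      · simpa [hi] using nonneg_iff_posSemidef.mp hP.nonneg
      · simpa [hi] using PosSemidef.zero
  · simp [Fintype.sum_option]

theorem IsRayleighMax.of_star_mul_mul {V : Matrix m m ℂ} (hV : IsUnit V)
    (h : IsRayleighMax (star V * R * V) (star V * A * V) C) : IsRayleighMax R A C := by
  obtain ⟨hC, u, hRu, hAu⟩ := h
  refine ⟨?_, V *ᵥ u, ?_⟩
  · rw [← hV.posSemidef_star_left_conjugate_iff, mul_sub, sub_mul, mul_smul_comm, smul_mul_assoc]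
    exact hC
  · simp only [star_mulVec_dotProduct_mulVec_mulVec]
    exact ⟨hRu, hAu⟩

open scoped Norms.L2Operator MatrixOrder in
theorem exists_isRayleighMax_of_isStarProjection {P : Matrix m m ℂ} (hP : IsStarProjection P)
    (hA : A.PosSemidef) (hPA : (P - A).PosSemidef) (hA0 : A ≠ 0) : ∃ C, IsRayleighMax P A C := by
  have : Nonempty m := by
    by_contra h
    exact hA0 (Matrix.ext fun i => (not_nonempty_iff.mp h).elim i)
  obtain ⟨hAP, hPA'⟩ := hP.mul_right_and_mul_left_of_nonneg_of_le hA.nonneg (le_iff.mpr hPA)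
  obtain ⟨w, hw0, hAw⟩ := hA.exists_mulVec_eq_norm_smul
  set C := ‖A‖
  have hC : (C : ℂ) ≠ 0 := by exact_mod_cast norm_ne_zero_iff.mpr hA0
  have hPw : P *ᵥ w = w := by
    have h : (C : ℂ) • P *ᵥ w = (C : ℂ) • w := by rw [← mulVec_smul, ← hAw, mulVec_mulVec, hPA']
    exact smul_right_injective _ hC h
  refine ⟨C, ?_, w, ?_, ?_⟩
  · have hle : ((C : ℂ) • 1 - A).PosSemidef := by
      simpa [le_iff, Algebra.algebraMap_eq_smul_one] using
        hA.1.isSelfAdjoint.le_algebraMap_norm_self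
    have h := hle.mul_mul_conjTranspose_same P
    rwa [← star_eq_conjTranspose, hP.isSelfAdjoint.star_eq, mul_sub, sub_mul, mul_smul_comm,
      mul_one, smul_mul_assoc, hP.isIdempotentElem.eq, hPA', hAP] at h
  · rw [hPw]
    exact dotProduct_star_self_pos_iff.mpr hw0
  · rw [hPw, hAw, dotProduct_smul, smul_eq_mul]

theorem exists_isRayleighMax (hR : R.PosSemidef) (hA : A.PosSemidef) (hRA : (R - A).PosSemidef)
    (hA0 : A ≠ 0) : ∃ C, IsRayleighMax R A C := by
  obtain ⟨V, hV, hP⟩ := hR.exists_isUnit_isStarProjection_star_mul_mul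
  have hVA : star V * A * V ≠ 0 := by
    rwa [Ne, hV.mul_left_eq_zero, hV.star.mul_right_eq_zero]
  obtain ⟨C, hC⟩ := exists_isRayleighMax_of_isStarProjection hP
    (hV.posSemidef_star_left_conjugate_iff.mpr hA)
    (by rw [← sub_mul, ← mul_sub]; exact hV.posSemidef_star_left_conjugate_iff.mpr hRA) hVA
  exact ⟨C, hC.of_star_mul_mul hV⟩

theorem re_trace_mul_div_le (hC : ((C : ℂ) • R - A).PosSemidef) {M : Matrix m m ℂ}
    (hM : M.PosSemidef) (hRM : 0 < (R * M).trace.re) :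
    (A * M).trace.re / (R * M).trace.re ≤ C := by
  have h := (Complex.le_def.mp (hC.trace_mul_nonneg hM)).1
  rw [sub_mul, trace_sub, smul_mul_assoc, trace_smul, smul_eq_mul, Complex.sub_re,
    Complex.re_ofReal_mul, Complex.zero_re] at h
  rw [div_le_iff₀ hRM]
  linarith

theorem IsRayleighMax.exists_isStarProjection (h : IsRayleighMax R A C) :
    ∃ P : Matrix m m ℂ, IsStarProjection P ∧ 0 < (R * P).trace.re ∧
      (A * P).trace = C * (R * P).trace := by
  obtain ⟨-, u, hRu, hAu⟩ := h
  have hu : u ≠ 0 := by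
    rintro rfl
    simp at hRu
  have htrace (X : Matrix m m ℂ) :
      (X * ((star u ⬝ᵥ u)⁻¹ • vecMulVec u (star u))).trace
        = (star u ⬝ᵥ u)⁻¹ * star u ⬝ᵥ (X *ᵥ u) := by
    rw [Matrix.mul_smul, trace_smul, smul_eq_mul, trace_mul_vecMulVec_star]
  refine ⟨_, isStarProjection_inv_smul_vecMulVec hu, ?_, ?_⟩
  · rw [htrace]
    have hc : 0 < (star u ⬝ᵥ u)⁻¹ := Right.inv_pos.mpr (dotProduct_star_self_pos_iff.mpr hu)
    exact (Complex.lt_def.mp (mul_pos hc hRu)).1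
  · rw [htrace, htrace, hAu, mul_left_comm]

end Matrix

theorem stmt_0_general {d n : ℕ}
    (η : Fin n → ℝ) (ρ : Fin n → Matrix (Fin d) (Fin d) ℂ)
    (hη : ∀ i, 0 < η i)
    (hρ : ∀ i, (ρ i).PosSemidef) (hρtr : ∀ i, (ρ i).trace = 1)
    (x : Fin n)
    (ρ₀ : Matrix (Fin d) (Fin d) ℂ) (hρ₀ : ρ₀ = ∑ i, (η i : ℂ) • ρ i) :
    ∃ C : ℝ,
      IsGreatest { r : ℝ | ∃ M : Option (Fin n) → Matrix (Fin d) (Fin d) ℂ,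
          (∀ j, (M j).PosSemidef) ∧ ∑ j, M j = 1 ∧
          0 < (ρ₀ * M (some x)).trace.re ∧
          r = η x * (ρ x * M (some x)).trace.re / (ρ₀ * M (some x)).trace.re } C ∧
      IsLeast { q : ℝ | ((q : ℂ) • ρ₀ - (η x : ℂ) • ρ x).PosSemidef } C := by
  have hηρ (i : Fin n) : ((η i : ℂ) • ρ i).PosSemidef :=
    (hρ i).smul (Complex.zero_le_real.mpr (hη i).le)
  have hρ₀psd : ρ₀.PosSemidef := hρ₀ ▸ posSemidef_sum _ fun i _ => hηρ i
  have hρ₀x : (ρ₀ - (η x : ℂ) • ρ x).PosSemidef := by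
    rw [hρ₀, ← Finset.add_sum_erase _ _ (Finset.mem_univ x), add_sub_cancel_left]
    exact posSemidef_sum _ fun i _ => hηρ i
  have hηρx : (η x : ℂ) • ρ x ≠ 0 := fun h => by
    simpa [hρtr, (hη x).ne'] using congrArg trace h
  have hconf (M : Matrix (Fin d) (Fin d) ℂ) :
      η x * (ρ x * M).trace.re = (((η x : ℂ) • ρ x) * M).trace.re := by
    rw [smul_mul_assoc, trace_smul, smul_eq_mul, Complex.re_ofReal_mul]
  obtain ⟨C, hC⟩ := exists_isRayleighMax hρ₀psd (hηρ x) hρ₀x hηρx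
  obtain ⟨P, hP, hρ₀P, hxP⟩ := hC.exists_isStarProjection
  obtain ⟨M, hM, hMsum, hMx⟩ := hP.exists_povm x
  refine ⟨C, ⟨⟨M, hM, hMsum, hMx ▸ hρ₀P, ?_⟩, ?_⟩, hC.isLeast⟩
  · rw [hMx, hconf, hxP, Complex.re_ofReal_mul, mul_div_assoc, div_self hρ₀P.ne', mul_one]
  · rintro r ⟨M, hM, -, hpos, rfl⟩
    rw [hconf]
    exact re_trace_mul_div_le hC.1 (hM _) hpos

/-- the maximum confidence (max over measurements with Tr(ρ₀ Mₓ) > 0 of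
η_x Tr(ρ_x Mₓ)/Tr(ρ₀ Mₓ)) equals min{q ∈ ℝ : q ρ₀ − η_x ρ_x ⪰ 0}. -/
theorem stmt_0 {d n : ℕ} (hd : 0 < d) (hn : 0 < n)
    (η : Fin n → ℝ) (ρ : Fin n → Matrix (Fin d) (Fin d) ℂ)
    (hη : ∀ i, 0 < η i) (hηsum : ∑ i, η i = 1)
    (hρ : ∀ i, (ρ i).PosSemidef) (hρtr : ∀ i, (ρ i).trace = 1)
    (x : Fin n)
    (ρ₀ : Matrix (Fin d) (Fin d) ℂ) (hρ₀ : ρ₀ = ∑ i, (η i : ℂ) • ρ i) :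
    ∃ C : ℝ,
      IsGreatest { r : ℝ | ∃ M : Option (Fin n) → Matrix (Fin d) (Fin d) ℂ,
          (∀ j, (M j).PosSemidef) ∧ ∑ j, M j = 1 ∧
          0 < (ρ₀ * M (some x)).trace.re ∧
          r = η x * (ρ x * M (some x)).trace.re / (ρ₀ * M (some x)).trace.re } C ∧
      IsLeast { q : ℝ | ((q : ℂ) • ρ₀ - (η x : ℂ) • ρ x).PosSemidef } C :=
  stmt_0_general η ρ hη hρ hρtr x ρ₀ hρ₀
end

section
/- Complementary slackness: let {M_?} ∪ {M_i} be a maximum-confidence measurement of E and H ∈ H(E) (the feasible dual set). Then M achieves p_G(E) and H achieves q_G(E) if and only if Tr(M_? H) = 0 and Tr[M_i(H − η_i ρ_i)] = 0 for all i. -/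
open Matrix BigOperators
open scoped ComplexOrder

/-!
Since `∑ M = 1`, the duality gap `Tr H - ∑ η_i Tr(ρ_i M_i)` equals
`Tr(M_? H) + ∑ Tr[M_i (H - η_i ρ_i)]`, a sum of terms with nonnegative real part (the first
because both factors are positive semidefinite, the others by dual feasibility). Weak and
strong duality squeeze both objectives against `p`, so they attain it iff the gap vanishes,
iff every term does. Each term is the trace of a product of Hermitian matrices, hence real,
so its real part vanishing is the same as the term vanishing.
-/

namespace Matrix

variable {𝕜 : Type*} [RCLike 𝕜] {m : Type*} [Fintype m]

open scoped MatrixOrder in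
theorem PosSemidef.trace_mul_nonneg_s9 {A B : Matrix m m 𝕜} (hA : A.PosSemidef) (hB : B.PosSemidef) :
    0 ≤ (A * B).trace := by
  classical
  set S := CFC.sqrt A
  have hS : S.IsHermitian := (CFC.sqrt_nonneg A).posSemidef.isHermitian
  have hcycle : (A * B).trace = (Sᴴ * B * S).trace := by
    rw [hS.eq, ← CFC.sqrt_mul_sqrt_self A hA.nonneg, Matrix.mul_assoc, trace_mul_comm]
  rw [hcycle]
  exact (hB.conjTranspose_mul_mul_same S).trace_nonneg

theorem IsHermitian.trace_mul_eq_zero_iff {A B : Matrix m m 𝕜} (hA : A.IsHermitian)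
    (hB : B.IsHermitian) : (A * B).trace = 0 ↔ RCLike.re (A * B).trace = 0 := by
  have hreal : (RCLike.re (A * B).trace : 𝕜) = (A * B).trace := by
    rw [← RCLike.conj_eq_iff_re, starRingEnd_apply, ← trace_conjTranspose, conjTranspose_mul,
      hA.eq, hB.eq, trace_mul_comm]
  exact ⟨fun h => by simp [h], fun h => by rw [← hreal, h, RCLike.ofReal_zero]⟩

theorem trace_eq_add_sum_trace_mul_sub_add [DecidableEq m] {ι : Type*} [Fintype ι]
    {M : Option ι → Matrix m m 𝕜} (hM : ∑ j, M j = 1) (H : Matrix m m 𝕜) (η : ι → 𝕜)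
    (ρ : ι → Matrix m m 𝕜) :
    H.trace = (M none * H).trace + ∑ i, (M (some i) * (H - η i • ρ i)).trace
      + ∑ i, η i * (ρ i * M (some i)).trace := by
  have hsplit : H.trace = (M none * H).trace + ∑ i, (M (some i) * H).trace := by
    rw [← Fintype.sum_option (fun j => (M j * H).trace), ← trace_sum, ← Finset.sum_mul, hM,
      Matrix.one_mul]
  simp only [hsplit, Matrix.mul_sub, Matrix.mul_smul, trace_sub, trace_smul, smul_eq_mul,
    trace_mul_comm (M (some _)) (ρ _), Finset.sum_sub_distrib]
  ring

end Matrix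

theorem eq_and_eq_iff_slacks_eq_zero {α ι : Type*} [Field α] [LinearOrder α]
    [IsStrictOrderedRing α] [Fintype ι] {a b v p : α} {c : ι → α} (h : a = b + ∑ i, c i + v)
    (hb : 0 ≤ b) (hc : ∀ i, 0 ≤ c i) (hvp : v ≤ p) (hpa : p ≤ a) :
    v = p ∧ a = p ↔ b = 0 ∧ ∀ i, c i = 0 := by
  have hsum : 0 ≤ ∑ i, c i := Finset.sum_nonneg fun i _ => hc i
  constructor
  · rintro ⟨rfl, rfl⟩
    have hcsum : ∑ i, c i = 0 := by linarith
    exact ⟨by linarith, fun i => (Finset.sum_eq_zero_iff_of_nonneg fun i _ => hc i).mp hcsum i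
      (Finset.mem_univ i)⟩
  · rintro ⟨rfl, hc0⟩
    simp only [hc0, Finset.sum_const_zero, zero_add] at h
    constructor <;> linarith

theorem stmt_9_general {d n : ℕ}
    (η : Fin n → ℝ) (ρ : Fin n → Matrix (Fin d) (Fin d) ℂ) (hρ : ∀ i, (ρ i).PosSemidef)
    (ρ₀ : Matrix (Fin d) (Fin d) ℂ) (C : Fin n → ℝ) (p : ℝ)
    (hat :
      IsGreatest { r : ℝ | ∃ M : Option (Fin n) → Matrix (Fin d) (Fin d) ℂ,
          (∀ j, (M j).PosSemidef) ∧ ∑ j, M j = 1 ∧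
          (∀ i, (((C i : ℂ) • ρ₀ - (η i : ℂ) • ρ i) * M (some i)).trace = 0) ∧
          r = ∑ i, η i * (ρ i * M (some i)).trace.re } p ∧
      IsLeast { t : ℝ | ∃ H : Matrix (Fin d) (Fin d) ℂ, H.PosSemidef ∧
          (∀ i, ∀ F : Matrix (Fin d) (Fin d) ℂ, F.PosSemidef →
            (((C i : ℂ) • ρ₀ - (η i : ℂ) • ρ i) * F).trace = 0 →
            0 ≤ ((H - (η i : ℂ) • ρ i) * F).trace.re) ∧
          t = H.trace.re } p)
    (M : Option (Fin n) → Matrix (Fin d) (Fin d) ℂ)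
    (hMpsd : ∀ j, (M j).PosSemidef) (hMsum : ∑ j, M j = 1)
    (hMmc : ∀ i, (((C i : ℂ) • ρ₀ - (η i : ℂ) • ρ i) * M (some i)).trace = 0)
    (H : Matrix (Fin d) (Fin d) ℂ) (hH : H.PosSemidef)
    (hHfeas : ∀ i, ∀ F : Matrix (Fin d) (Fin d) ℂ, F.PosSemidef →
      (((C i : ℂ) • ρ₀ - (η i : ℂ) • ρ i) * F).trace = 0 →
      0 ≤ ((H - (η i : ℂ) • ρ i) * F).trace.re) :
    ((∑ i, η i * (ρ i * M (some i)).trace.re) = p ∧ H.trace.re = p) ↔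
      ((M none * H).trace = 0 ∧
        ∀ i, (M (some i) * (H - (η i : ℂ) • ρ i)).trace = 0) := by
  have hdecomp := congrArg Complex.re
    (trace_eq_add_sum_trace_mul_sub_add hMsum H (fun i => (η i : ℂ)) ρ)
  simp only [Complex.add_re, Complex.re_sum, Complex.re_ofReal_mul] at hdecomp
  have hslack_nonneg i : 0 ≤ (M (some i) * (H - (η i : ℂ) • ρ i)).trace.re :=
    trace_mul_comm (M (some i)) _ ▸ hHfeas i _ (hMpsd (some i)) (hMmc i)
  have hdual_herm i : (H - (η i : ℂ) • ρ i).IsHermitian :=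
    hH.isHermitian.sub ((hρ i).isHermitian.smul (Complex.conj_ofReal _))
  rw [(hMpsd none).isHermitian.trace_mul_eq_zero_iff hH.isHermitian,
    forall_congr' fun i => (hMpsd (some i)).isHermitian.trace_mul_eq_zero_iff (hdual_herm i)]
  exact eq_and_eq_iff_slacks_eq_zero hdecomp
    (Complex.nonneg_iff.mp ((hMpsd none).trace_mul_nonneg_s9 hH)).1 hslack_nonneg
    (hat.1.2 ⟨M, hMpsd, hMsum, hMmc, rfl⟩) (hat.2.2 ⟨H, hH, hHfeas, rfl⟩)

/-- complementary slackness: assuming strong duality p_G(E) = q_G(E) = p,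
a maximum-confidence measurement M achieves p_G(E) and a feasible dual H achieves q_G(E)
iff Tr(M_? H) = 0 and Tr[M_i (H − η_i ρ_i)] = 0 for all i. -/
theorem stmt_9 {d n : ℕ} (hd : 0 < d) (hn : 0 < n)
    (η : Fin n → ℝ) (ρ : Fin n → Matrix (Fin d) (Fin d) ℂ)
    (hη : ∀ i, 0 < η i) (hηsum : ∑ i, η i = 1)
    (hρ : ∀ i, (ρ i).PosSemidef) (hρtr : ∀ i, (ρ i).trace = 1)
    (ρ₀ : Matrix (Fin d) (Fin d) ℂ) (hρ₀ : ρ₀ = ∑ i, (η i : ℂ) • ρ i)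
    (C : Fin n → ℝ)
    (hC : ∀ i, IsLeast { q : ℝ | ((q : ℂ) • ρ₀ - (η i : ℂ) • ρ i).PosSemidef } (C i)) (p : ℝ)
    (hat :
      IsGreatest { r : ℝ | ∃ M : Option (Fin n) → Matrix (Fin d) (Fin d) ℂ,
          (∀ j, (M j).PosSemidef) ∧ ∑ j, M j = 1 ∧
          (∀ i, (((C i : ℂ) • ρ₀ - (η i : ℂ) • ρ i) * M (some i)).trace = 0) ∧
          r = ∑ i, η i * (ρ i * M (some i)).trace.re } p ∧
      IsLeast { t : ℝ | ∃ H : Matrix (Fin d) (Fin d) ℂ, H.PosSemidef ∧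
          (∀ i, ∀ F : Matrix (Fin d) (Fin d) ℂ, F.PosSemidef →
            (((C i : ℂ) • ρ₀ - (η i : ℂ) • ρ i) * F).trace = 0 →
            0 ≤ ((H - (η i : ℂ) • ρ i) * F).trace.re) ∧
          t = H.trace.re } p)
    (M : Option (Fin n) → Matrix (Fin d) (Fin d) ℂ)
    (hMpsd : ∀ j, (M j).PosSemidef) (hMsum : ∑ j, M j = 1)
    (hMmc : ∀ i, (((C i : ℂ) • ρ₀ - (η i : ℂ) • ρ i) * M (some i)).trace = 0)
    (H : Matrix (Fin d) (Fin d) ℂ) (hH : H.PosSemidef)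
    (hHfeas : ∀ i, ∀ F : Matrix (Fin d) (Fin d) ℂ, F.PosSemidef →
      (((C i : ℂ) • ρ₀ - (η i : ℂ) • ρ i) * F).trace = 0 →
      0 ≤ ((H - (η i : ℂ) • ρ i) * F).trace.re) :
    ((∑ i, η i * (ρ i * M (some i)).trace.re) = p ∧ H.trace.re = p) ↔
      ((M none * H).trace = 0 ∧
        ∀ i, (M (some i) * (H - (η i : ℂ) • ρ i)).trace = 0) :=
  stmt_9_general η ρ hρ ρ₀ C p hat M hMpsd hMsum hMmc H hH hHfeas
end

section
/- For the tensor product ensemble E = ⊗_{l=1}^L E^l of quantum state ensembles E^l = {(η_i^l, ρ_i^l)}, the maximum confidence to identify the sequence state ρ_x⃗ = ⊗_l ρ_{x_l}^l with prior η_x⃗ = Π_l η_{x_l}^l factorizes: C_x⃗(E) = Π_{l=1}^L C_{x_l}(E^l). -/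
open Matrix BigOperators
open scoped ComplexOrder

/-- L-fold tensor (Kronecker) product of square complex matrices, realized on the
index type ∀ l, Fin (d l). -/
def tens {L : ℕ} {d : Fin L → ℕ}
    (X : ∀ l, Matrix (Fin (d l)) (Fin (d l)) ℂ) :
    Matrix (∀ l, Fin (d l)) (∀ l, Fin (d l)) ℂ :=
  Matrix.of fun a b => ∏ l, X l (a l) (b l)

/-!
Write `A_l = ρ₀ l` and `B_l = η_{x_l} ρ_{x_l}`. Since `B_l ⪰ 0` and `C_l A_l - B_l ⪰ 0`, a
telescoping sum of tensor products, each with one factor `C_k A_k - B_k` and all others positive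
semidefinite, shows `(∏ C_l) ⊗ A - ⊗ B ⪰ 0`. Conversely, if `q < ∏ C_l`, pick `0 ≤ t_l < C_l`
with `q < ∏ t_l`. Minimality of `C_l` gives vectors `w_l` with
`t_l ⟨w_l, A_l w_l⟩ < ⟨w_l, B_l w_l⟩`, and evaluating `q ⊗ A - ⊗ B` on `⊗ w_l`, where both
quadratic forms factorize, forces `∏ t_l < q`.
-/

open Filter Topology Function

lemma Matrix.PosSemidef.ofReal_re_dotProduct_mulVec {n : Type*} [Fintype n]
    {M : Matrix n n ℂ} (hM : M.PosSemidef) (w : n → ℂ) :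
    ((star w ⬝ᵥ M *ᵥ w).re : ℂ) = star w ⬝ᵥ M *ᵥ w :=
  (Complex.eq_re_of_ofReal_le (by exact_mod_cast hM.dotProduct_mulVec_nonneg w)).symm

lemma exists_mul_re_lt_re_of_not_posSemidef {n : Type*} [Fintype n] {A B : Matrix n n ℂ}
    (hA : A.PosSemidef) (hB : B.PosSemidef) {t : ℝ} (ht : ¬((t : ℂ) • A - B).PosSemidef) :
    ∃ w : n → ℂ, t * (star w ⬝ᵥ A *ᵥ w).re < (star w ⬝ᵥ B *ᵥ w).re := by
  have hherm : ((t : ℂ) • A - B).IsHermitian :=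
    (hA.isHermitian.smul (Complex.conj_ofReal t)).sub hB.isHermitian
  obtain ⟨w, hw⟩ : ∃ w, ¬ 0 ≤ star w ⬝ᵥ ((t : ℂ) • A - B) *ᵥ w := by
    by_contra! h
    exact ht (.of_dotProduct_mulVec_nonneg hherm h)
  refine ⟨w, ?_⟩
  rw [sub_mulVec, dotProduct_sub, smul_mulVec, dotProduct_smul, smul_eq_mul,
    ← hA.ofReal_re_dotProduct_mulVec, ← hB.ofReal_re_dotProduct_mulVec, ← Complex.ofReal_mul,
    ← Complex.ofReal_sub, Complex.zero_le_real] at hw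
  linarith

lemma Finset.prod_lt_prod_of_nonneg {ι : Type*} [Fintype ι] [Nonempty ι] {f g : ι → ℝ}
    (hf : ∀ i, 0 ≤ f i) (hfg : ∀ i, f i < g i) : ∏ i, f i < ∏ i, g i := by
  have hg : 0 < ∏ i, g i := Finset.prod_pos fun i _ => (hf i).trans_lt (hfg i)
  by_cases hpos : ∀ i, 0 < f i
  · exact Finset.prod_lt_prod_of_nonempty (fun i _ => hpos i) (fun i _ => hfg i) univ_nonempty
  · simp only [not_forall, not_lt] at hpos
    obtain ⟨i, hi⟩ := hpos
    rwa [Finset.prod_eq_zero (Finset.mem_univ i) (le_antisymm hi (hf i))]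

lemma exists_lt_prod_of_lt_prod {ι : Type*} [Fintype ι] {c : ι → ℝ} (hc : ∀ i, 0 < c i)
    {q : ℝ} (hq : q < ∏ i, c i) :
    ∃ t : ι → ℝ, (∀ i, 0 ≤ t i ∧ t i < c i) ∧ q < ∏ i, t i := by
  have hcont : Continuous fun ε : ℝ => ∏ i, (c i - ε) := by fun_prop
  have hlim : ∀ᶠ ε in 𝓝 (0 : ℝ), q < ∏ i, (c i - ε) :=
    continuousAt_const.eventually_lt hcont.continuousAt (by simpa using hq)
  have hsmall : ∀ᶠ ε in 𝓝 (0 : ℝ), ∀ i, ε < c i :=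
    eventually_all.2 fun i => eventually_lt_nhds (hc i)
  obtain ⟨ε, ⟨hqε, hεc⟩, hε⟩ :=
    (((hlim.and hsmall).filter_mono nhdsWithin_le_nhds).and
      (self_mem_nhdsWithin : Set.Ioi (0 : ℝ) ∈ 𝓝[>] 0)).exists
  exact ⟨fun i => c i - ε, fun i => ⟨by linarith [hεc i], by linarith⟩, hqε⟩

lemma le_of_posSemidef_smul_sub_smul {n : Type*} [Fintype n] {M N : Matrix n n ℂ}
    (hM : M.trace = 1) (hN : N.trace = 1) {c e : ℝ}
    (h : ((c : ℂ) • M - (e : ℂ) • N).PosSemidef) : e ≤ c := by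
  have := h.trace_nonneg
  rw [trace_sub, trace_smul, trace_smul, hM, hN, smul_eq_mul, smul_eq_mul, mul_one, mul_one,
    ← Complex.ofReal_sub, Complex.zero_le_real] at this
  linarith

section Tensor

variable {L : ℕ} {d : Fin L → ℕ}

lemma tens_smul (c : Fin L → ℂ) (X : ∀ l, Matrix (Fin (d l)) (Fin (d l)) ℂ) :
    tens (fun l => c l • X l) = (∏ l, c l) • tens X := by
  ext a b
  simp [tens, Finset.prod_mul_distrib]

lemma tens_conjTranspose (X : ∀ l, Matrix (Fin (d l)) (Fin (d l)) ℂ) :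
    (tens X)ᴴ = tens fun l => (X l)ᴴ := by
  ext a b
  simp [tens, conjTranspose_apply, star_prod]

lemma tens_mul (X Y : ∀ l, Matrix (Fin (d l)) (Fin (d l)) ℂ) :
    tens X * tens Y = tens fun l => X l * Y l := by
  ext a b
  simp only [tens, mul_apply, of_apply, Fintype.prod_sum, Finset.prod_mul_distrib]

lemma tens_update_sub (F : ∀ l, Matrix (Fin (d l)) (Fin (d l)) ℂ)
    (k : Fin L) (M N : Matrix (Fin (d k)) (Fin (d k)) ℂ) :
    tens (update F k (M - N)) = tens (update F k M) - tens (update F k N) := by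
  ext a b
  simp only [tens, of_apply, Matrix.sub_apply,
    apply_update (fun l (X : Matrix (Fin (d l)) (Fin (d l)) ℂ) => X (a l) (b l)),
    Finset.prod_update_of_mem (Finset.mem_univ k)]
  ring

lemma posSemidef_tens {X : ∀ l, Matrix (Fin (d l)) (Fin (d l)) ℂ}
    (hX : ∀ l, (X l).PosSemidef) : (tens X).PosSemidef := by
  open scoped MatrixOrder Matrix.Norms.L2Operator in
  have : ∀ l, ∃ B : Matrix (Fin (d l)) (Fin (d l)) ℂ, X l = Bᴴ * B := fun l =>
    CStarAlgebra.nonneg_iff_eq_star_mul_self.mp (hX l).nonneg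
  choose B hB using this
  rw [funext hB, ← tens_mul, ← tens_conjTranspose]
  exact posSemidef_conjTranspose_mul_self _

lemma posSemidef_tens_sub_tens {X Y : ∀ l, Matrix (Fin (d l)) (Fin (d l)) ℂ}
    (hY : ∀ l, (Y l).PosSemidef) (hXY : ∀ l, (X l - Y l).PosSemidef) :
    (tens X - tens Y).PosSemidef := by
  have hX : ∀ l, (X l).PosSemidef := fun l => by simpa using (hXY l).add (hY l)
  suffices ∀ s : Finset (Fin L), (tens (s.piecewise X Y) - tens Y).PosSemidef by
    simpa using this Finset.univ
  intro s
  induction s using Finset.induction_on with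
  | empty => simpa using PosSemidef.zero
  | insert k s hk ih =>
    -- adding `k` to `s` changes a single tensor factor, from `Y k` to `X k`
    have hstep : tens ((insert k s).piecewise X Y) - tens (s.piecewise X Y) =
        tens (update (s.piecewise X Y) k (X k - Y k)) := by
      rw [tens_update_sub, Finset.piecewise_insert, ← s.piecewise_eq_of_notMem X Y hk,
        update_eq_self]
    rw [← sub_add_sub_cancel _ (tens (s.piecewise X Y)), hstep]
    refine (posSemidef_tens fun l => ?_).add ih
    rcases eq_or_ne l k with rfl | hl
    · simpa using hXY l
    · rw [update_of_ne hl]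
      exact s.piecewise_cases X Y (fun M => M.PosSemidef) (hX l) (hY l)

def tensVec (w : ∀ l, Fin (d l) → ℂ) : (∀ l, Fin (d l)) → ℂ :=
  fun a => ∏ l, w l (a l)

lemma tens_mulVec_tensVec (X : ∀ l, Matrix (Fin (d l)) (Fin (d l)) ℂ)
    (w : ∀ l, Fin (d l) → ℂ) : tens X *ᵥ tensVec w = tensVec fun l => X l *ᵥ w l := by
  ext a
  simp only [mulVec, dotProduct, tens, of_apply, tensVec, Fintype.prod_sum,
    Finset.prod_mul_distrib]

lemma star_tensVec (w : ∀ l, Fin (d l) → ℂ) : star (tensVec w) = tensVec fun l => star (w l) := by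
  ext a
  simp [tensVec, star_prod]

lemma tensVec_dotProduct_tensVec (u v : ∀ l, Fin (d l) → ℂ) :
    tensVec u ⬝ᵥ tensVec v = ∏ l, u l ⬝ᵥ v l := by
  simp only [dotProduct, tensVec, Fintype.prod_sum, Finset.prod_mul_distrib]

lemma star_tensVec_dotProduct_tens_mulVec (X : ∀ l, Matrix (Fin (d l)) (Fin (d l)) ℂ)
    (w : ∀ l, Fin (d l) → ℂ) :
    star (tensVec w) ⬝ᵥ tens X *ᵥ tensVec w = ∏ l, star (w l) ⬝ᵥ X l *ᵥ w l := by
  rw [tens_mulVec_tensVec, star_tensVec, tensVec_dotProduct_tensVec]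

lemma prod_lt_of_posSemidef_smul_tens_sub_tens [Nonempty (Fin L)]
    {A B : ∀ l, Matrix (Fin (d l)) (Fin (d l)) ℂ}
    (hA : ∀ l, (A l).PosSemidef) (hB : ∀ l, (B l).PosSemidef) {t : Fin L → ℝ}
    (ht : ∀ l, 0 ≤ t l) (hnot : ∀ l, ¬((t l : ℂ) • A l - B l).PosSemidef) {q : ℝ}
    (hq : ((q : ℂ) • tens A - tens B).PosSemidef) : ∏ l, t l < q := by
  choose w hw using fun l => exists_mul_re_lt_re_of_not_posSemidef (hA l) (hB l) (hnot l)
  set α := fun l => (star (w l) ⬝ᵥ A l *ᵥ w l).re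
  set β := fun l => (star (w l) ⬝ᵥ B l *ᵥ w l).re
  have hα : ∀ l, 0 ≤ α l := fun l => by
    simpa using Complex.le_def.mp ((hA l).dotProduct_mulVec_nonneg (w l)) |>.1
  have hqαβ : ∏ l, β l ≤ q * ∏ l, α l := by
    have := hq.dotProduct_mulVec_nonneg (tensVec w)
    simp only [sub_mulVec, dotProduct_sub, smul_mulVec, dotProduct_smul, smul_eq_mul,
      star_tensVec_dotProduct_tens_mulVec] at this
    rw [← Finset.prod_congr rfl fun l _ => (hA l).ofReal_re_dotProduct_mulVec (w l),
      ← Finset.prod_congr rfl fun l _ => (hB l).ofReal_re_dotProduct_mulVec (w l),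
      ← Complex.ofReal_prod, ← Complex.ofReal_prod, ← Complex.ofReal_mul, ← Complex.ofReal_sub,
      Complex.zero_le_real] at this
    linarith
  have hlt : (∏ l, t l) * ∏ l, α l < q * ∏ l, α l := by
    rw [← Finset.prod_mul_distrib]
    exact (Finset.prod_lt_prod_of_nonneg (fun l => mul_nonneg (ht l) (hα l)) hw).trans_le hqαβ
  exact lt_of_mul_lt_mul_right hlt (Finset.prod_nonneg fun l _ => hα l)

theorem isLeast_smul_tens_sub_tens [Nonempty (Fin L)]
    {A B : ∀ l, Matrix (Fin (d l)) (Fin (d l)) ℂ}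
    (hA : ∀ l, (A l).PosSemidef) (hB : ∀ l, (B l).PosSemidef) {c : Fin L → ℝ}
    (hc : ∀ l, 0 < c l) (h : ∀ l, IsLeast {q : ℝ | ((q : ℂ) • A l - B l).PosSemidef} (c l)) :
    IsLeast {q : ℝ | ((q : ℂ) • tens A - tens B).PosSemidef} (∏ l, c l) := by
  refine ⟨?_, fun q hq => ?_⟩
  · rw [Set.mem_ofPred_eq, Complex.ofReal_prod, ← tens_smul]
    exact posSemidef_tens_sub_tens hB fun l => (h l).1
  · by_contra! hlt
    obtain ⟨t, ht, hqt⟩ := exists_lt_prod_of_lt_prod hc hlt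
    have hnot : ∀ l, ¬((t l : ℂ) • A l - B l).PosSemidef := fun l hl =>
      (ht l).2.not_ge ((h l).2 hl)
    exact hqt.not_gt (prod_lt_of_posSemidef_smul_tens_sub_tens hA hB (fun l => (ht l).1) hnot hq)

end Tensor

theorem stmt_12_general {L : ℕ} (hL : 0 < L) {d n : Fin L → ℕ}
    (η : ∀ l, Fin (n l) → ℝ)
    (ρ : ∀ l, Fin (n l) → Matrix (Fin (d l)) (Fin (d l)) ℂ)
    (hη : ∀ l i, 0 < η l i) (hηsum : ∀ l, ∑ i, η l i = 1)
    (hρ : ∀ l i, (ρ l i).PosSemidef) (hρtr : ∀ l i, (ρ l i).trace = 1)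
    (ρ₀ : ∀ l, Matrix (Fin (d l)) (Fin (d l)) ℂ)
    (hρ₀ : ∀ l, ρ₀ l = ∑ i, (η l i : ℂ) • ρ l i)
    (C : ∀ l, Fin (n l) → ℝ)
    (hC : ∀ l i, IsLeast { q : ℝ | ((q : ℂ) • ρ₀ l - (η l i : ℂ) • ρ l i).PosSemidef } (C l i)) (x : ∀ l, Fin (n l)) :
    IsLeast { q : ℝ | ((q : ℂ) • tens ρ₀ -
        ((∏ l, η l (x l) : ℝ) : ℂ) • tens (fun l => ρ l (x l))).PosSemidef }
      (∏ l, C l (x l)) := by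
  have : Nonempty (Fin L) := ⟨⟨0, hL⟩⟩
  have hηρ : ∀ l i, ((η l i : ℂ) • ρ l i).PosSemidef := fun l i =>
    (hρ l i).smul (Complex.zero_le_real.mpr (hη l i).le)
  have hρ₀psd : ∀ l, (ρ₀ l).PosSemidef := fun l => by
    rw [hρ₀ l]
    exact posSemidef_sum _ fun i _ => hηρ l i
  have hρ₀tr : ∀ l, (ρ₀ l).trace = 1 := fun l => by
    simp [hρ₀ l, trace_sum, hρtr, ← Complex.ofReal_sum, hηsum l]
  have hCpos : ∀ l, 0 < C l (x l) := fun l =>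
    (hη l (x l)).trans_le (le_of_posSemidef_smul_sub_smul (hρ₀tr l) (hρtr l (x l)) (hC l (x l)).1)
  rw [Complex.ofReal_prod, ← tens_smul]
  exact isLeast_smul_tens_sub_tens hρ₀psd (fun l => hηρ l (x l)) hCpos fun l => hC l (x l)

/-- the maximum confidence of identifying the sequence state
ρ_x⃗ = ⊗_l ρ_{x_l} from E = ⊗_l E^l factorizes: C_x⃗(E) = ∏_l C_{x_l}(E^l),
where C is characterized as min{q : q ρ₀ − η ρ ⪰ 0}. -/
theorem stmt_12 {L : ℕ} (hL : 0 < L) {d n : Fin L → ℕ}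
    (hd : ∀ l, 0 < d l) (hn : ∀ l, 0 < n l)
    (η : ∀ l, Fin (n l) → ℝ)
    (ρ : ∀ l, Fin (n l) → Matrix (Fin (d l)) (Fin (d l)) ℂ)
    (hη : ∀ l i, 0 < η l i) (hηsum : ∀ l, ∑ i, η l i = 1)
    (hρ : ∀ l i, (ρ l i).PosSemidef) (hρtr : ∀ l i, (ρ l i).trace = 1)
    (ρ₀ : ∀ l, Matrix (Fin (d l)) (Fin (d l)) ℂ)
    (hρ₀ : ∀ l, ρ₀ l = ∑ i, (η l i : ℂ) • ρ l i)
    (C : ∀ l, Fin (n l) → ℝ)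
    (hC : ∀ l i, IsLeast { q : ℝ | ((q : ℂ) • ρ₀ l - (η l i : ℂ) • ρ l i).PosSemidef } (C l i)) (x : ∀ l, Fin (n l)) :
    IsLeast { q : ℝ | ((q : ℂ) • tens ρ₀ -
        ((∏ l, η l (x l) : ℝ) : ℂ) • tens (fun l => ρ l (x l))).PosSemidef }
      (∏ l, C l (x l)) :=
  stmt_12_general hL η ρ hη hηsum hρ hρtr ρ₀ hρ₀ C hC x
end
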